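/- Let 0 ≤ α ≤ (37-√505)/72 and let f(z) = z + a_2 z² + a_3 z³ + a_4 z⁴ + ⋯ be holomorphic on D with f' nonvanishing, f(z) ≠ 0 for z ≠ 0, and Re(f(z)/(z f'(z))) ≥ α on D ∖ {0}. Then |a_4| ≤ (1-α)(3-4α)(4-6α)/3. -/

import Mathlib

/-!
Write `f = z f' g`. Then `Re g ≥ α` and `g 0 = 1`, so `w = (g - 1) / (g + 1 - 2α)` maps the unit
disk into the closed unit disk with `w 0 = 0`. Comparing Taylor coefficients in `f = z f' g` and
`g - 1 = (g + 1 - 2α) w` gives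
`a₄ = 2(1 - α)/3 · (-(3 - 4α)(2 - 3α) w₁³ + (5 - 7α) w₁ w₂ - w₃)`.
Schwarz–Pick at the origin, applied to `w / z` and to its Möbius normalisation, gives `|w₁| ≤ 1`
and `|w₂|, |w₃| ≤ 1 - |w₁|²`. This reduces the estimate to a cubic inequality in `|w₁| ∈ [0, 1]`,
whose maximum is attained at `|w₁| = 1` as long as `36α² - 37α + 6 ≥ 0`.
-/

open Complex Metric Set Filter Topology
open scoped ComplexConjugate

section TaylorCoeff

variable {𝕜 : Type*} [NontriviallyNormedField 𝕜] {f g : 𝕜 → 𝕜} {n : ℕ}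

noncomputable def taylorCoeff (f : 𝕜 → 𝕜) (n : ℕ) : 𝕜 := iteratedDeriv n f 0 / n.factorial

lemma taylorCoeff_zero (f : 𝕜 → 𝕜) : taylorCoeff f 0 = f 0 := by
  simp [taylorCoeff]

lemma taylorCoeff_one (f : 𝕜 → 𝕜) : taylorCoeff f 1 = deriv f 0 := by
  simp [taylorCoeff]

lemma taylorCoeff_const (c : 𝕜) (n : ℕ) :
    taylorCoeff (fun _ => c) n = if n = 0 then c else 0 := by
  rcases eq_or_ne n 0 with rfl | hn <;> simp [taylorCoeff, iteratedDeriv_const, *]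

lemma taylorCoeff_id (n : ℕ) : taylorCoeff (fun z : 𝕜 => z) n = if n = 1 then 1 else 0 := by
  rcases eq_or_ne n 1 with rfl | hn <;> simp [taylorCoeff, iteratedDeriv_fun_id_zero, *]

lemma Filter.EventuallyEq.taylorCoeff_eq (h : f =ᶠ[𝓝 0] g) (n : ℕ) :
    taylorCoeff f n = taylorCoeff g n := by
  rw [taylorCoeff, taylorCoeff, h.iteratedDeriv_eq]

lemma taylorCoeff_sub (hf : ContDiffAt 𝕜 n f 0) (hg : ContDiffAt 𝕜 n g 0) :
    taylorCoeff (fun z => f z - g z) n = taylorCoeff f n - taylorCoeff g n := by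
  simp only [taylorCoeff, iteratedDeriv_fun_sub hf hg, sub_div]

lemma taylorCoeff_add (hf : ContDiffAt 𝕜 n f 0) (hg : ContDiffAt 𝕜 n g 0) :
    taylorCoeff (fun z => f z + g z) n = taylorCoeff f n + taylorCoeff g n := by
  simp only [taylorCoeff, iteratedDeriv_fun_add hf hg, add_div]

lemma taylorCoeff_mul [CharZero 𝕜] (hf : ContDiffAt 𝕜 n f 0) (hg : ContDiffAt 𝕜 n g 0) :
    taylorCoeff (fun z => f z * g z) n =
      ∑ i ∈ Finset.range (n + 1), taylorCoeff f i * taylorCoeff g (n - i) := by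
  rw [taylorCoeff, iteratedDeriv_fun_mul hf hg, Finset.sum_div]
  refine Finset.sum_congr rfl fun i hi => ?_
  have hin : i ≤ n := Nat.lt_succ_iff.1 (Finset.mem_range.1 hi)
  rw [taylorCoeff, taylorCoeff, Nat.choose_eq_factorial_div_factorial hin,
    Nat.cast_div (Nat.factorial_mul_factorial_dvd_factorial hin)
      (Nat.cast_ne_zero.2 (by positivity))]
  have := n.factorial_ne_zero
  push_cast
  field_simp

lemma taylorCoeff_id_mul [CharZero 𝕜] (hf : ContDiffAt 𝕜 ↑(n + 1) f 0) :
    taylorCoeff (fun z => z * f z) (n + 1) = taylorCoeff f n := by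
  rw [taylorCoeff_mul contDiffAt_fun_id hf, Finset.sum_eq_single 1]
  · simp [taylorCoeff_id]
  · intro i _ hi
    simp [taylorCoeff_id, hi]
  · simp

lemma taylorCoeff_deriv [CharZero 𝕜] (f : 𝕜 → 𝕜) (n : ℕ) :
    taylorCoeff (deriv f) n = (n + 1) * taylorCoeff f (n + 1) := by
  rw [taylorCoeff, taylorCoeff, iteratedDeriv_succ', Nat.factorial_succ]
  push_cast
  field_simp

end TaylorCoeff

lemma DifferentiableOn.analyticAt_zero {f : ℂ → ℂ} (hf : DifferentiableOn ℂ f (ball 0 1)) :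
    AnalyticAt ℂ f 0 :=
  hf.analyticAt (ball_mem_nhds 0 one_pos)

section SelfMapsOfDisk

variable {φ w : ℂ → ℂ}

lemma norm_sub_le_norm_one_sub_conj_mul {a b : ℂ} (ha : ‖a‖ ≤ 1) (hb : ‖b‖ ≤ 1) :
    ‖b - a‖ ≤ ‖1 - conj a * b‖ := by
  have ha' : normSq a ≤ 1 := by rw [normSq_eq_norm_sq]; nlinarith [norm_nonneg a]
  have hb' : normSq b ≤ 1 := by rw [normSq_eq_norm_sq]; nlinarith [norm_nonneg b]
  rw [norm_def, norm_def]
  apply Real.sqrt_le_sqrt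
  simp only [normSq_apply, sub_re, sub_im, one_re, one_im, mul_re, mul_im, conj_re,
    conj_im] at *
  -- the difference of the two sides is (1 - |a|²)(1 - |b|²)
  nlinarith [mul_nonneg (sub_nonneg.2 ha') (sub_nonneg.2 hb')]

lemma taylorCoeff_eq_zero_of_norm_eq_one (hd : DifferentiableOn ℂ φ (ball 0 1))
    (hφ : MapsTo φ (ball 0 1) (closedBall 0 1)) (h1 : ‖φ 0‖ = 1) {n : ℕ} (hn : n ≠ 0) :
    taylorCoeff φ n = 0 := by
  have hmax : IsLocalMax (norm ∘ φ) 0 :=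
    mem_of_superset (ball_mem_nhds 0 one_pos) fun z hz => by simpa [h1] using hφ hz
  have hconst : φ =ᶠ[𝓝 0] fun _ => φ 0 :=
    Complex.eventually_eq_of_isLocalMax_norm
      (eventually_of_mem (ball_mem_nhds 0 one_pos) fun z hz =>
        hd.differentiableAt (isOpen_ball.mem_nhds hz)) hmax
  rw [hconst.taylorCoeff_eq, taylorCoeff_const, if_neg hn]

lemma exists_sub_eq_mobius_mul (hd : DifferentiableOn ℂ φ (ball 0 1))
    (hφ : MapsTo φ (ball 0 1) (closedBall 0 1)) (h1 : ‖φ 0‖ < 1) :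
    ∃ ψ : ℂ → ℂ, DifferentiableOn ℂ ψ (ball 0 1) ∧ MapsTo ψ (ball 0 1) (closedBall 0 1) ∧
      ψ 0 = 0 ∧ ∀ z ∈ ball (0 : ℂ) 1, φ z - φ 0 = (1 - conj (φ 0) * φ z) * ψ z := by
  have hden : ∀ z ∈ ball (0 : ℂ) 1, 1 - conj (φ 0) * φ z ≠ 0 := fun z hz h => by
    have hlt : ‖conj (φ 0) * φ z‖ < 1 := by
      rw [norm_mul, norm_conj]
      nlinarith [norm_nonneg (φ 0), mem_closedBall_zero_iff.1 (hφ hz)]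
    rw [← sub_eq_zero.1 h, norm_one] at hlt
    exact lt_irrefl _ hlt
  refine ⟨fun z => (φ z - φ 0) / (1 - conj (φ 0) * φ z), ?_, fun z hz => ?_, by simp,
    fun z hz => (mul_div_cancel₀ _ (hden z hz)).symm⟩
  · exact (hd.sub_const _).div ((differentiableOn_const 1).sub (hd.const_mul _)) hden
  · rw [mem_closedBall_zero_iff, norm_div]
    exact div_le_one_of_le₀ (norm_sub_le_norm_one_sub_conj_mul h1.le
      (mem_closedBall_zero_iff.1 (hφ hz))) (norm_nonneg _)

lemma taylorCoeff_of_sub_eq_mobius_mul {ψ : ℂ → ℂ} (hφ : AnalyticAt ℂ φ 0)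
    (hψ : AnalyticAt ℂ ψ 0) (hψ0 : ψ 0 = 0)
    (h : ∀ᶠ z in 𝓝 0, φ z - φ 0 = (1 - conj (φ 0) * φ z) * ψ z) :
    taylorCoeff φ 1 = ((1 - ‖φ 0‖ ^ 2 : ℝ) : ℂ) * taylorCoeff ψ 1 ∧
      taylorCoeff φ 2 = ((1 - ‖φ 0‖ ^ 2 : ℝ) : ℂ) *
        (taylorCoeff ψ 2 - conj (φ 0) * taylorCoeff ψ 1 ^ 2) := by
  have hφ' (n : ℕ) : ContDiffAt ℂ n φ 0 := hφ.contDiffAt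
  have hψ' (n : ℕ) : ContDiffAt ℂ n ψ 0 := hψ.contDiffAt
  have h1 := EventuallyEq.taylorCoeff_eq h 1
  have h2 := EventuallyEq.taylorCoeff_eq h 2
  simp (disch := fun_prop) only [taylorCoeff_sub, taylorCoeff_mul, taylorCoeff_const,
    Finset.sum_range_succ, Finset.sum_range_zero] at h1 h2
  norm_num [taylorCoeff_zero, hψ0] at h1 h2
  have hp : ((1 - ‖φ 0‖ ^ 2 : ℝ) : ℂ) = 1 - conj (φ 0) * φ 0 := by
    rw [mul_comm, mul_conj, normSq_eq_norm_sq]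
    push_cast
    ring
  rw [hp]
  exact ⟨by linear_combination h1, by linear_combination h2 - conj (φ 0) * taylorCoeff ψ 1 * h1⟩

lemma norm_taylorCoeff_one_le_one_of_map_zero (hd : DifferentiableOn ℂ w (ball 0 1))
    (hw : MapsTo w (ball 0 1) (closedBall 0 1)) (hw0 : w 0 = 0) : ‖taylorCoeff w 1‖ ≤ 1 := by
  rw [taylorCoeff_one]
  exact Complex.norm_deriv_le_one_of_mapsTo_ball hd (by rwa [hw0]) one_pos

lemma norm_taylorCoeff_one_le (hd : DifferentiableOn ℂ φ (ball 0 1))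
    (hφ : MapsTo φ (ball 0 1) (closedBall 0 1)) : ‖taylorCoeff φ 1‖ ≤ 1 - ‖φ 0‖ ^ 2 := by
  rcases (mem_closedBall_zero_iff.1 (hφ (mem_ball_self one_pos))).eq_or_lt with h1 | h1
  · simp [taylorCoeff_eq_zero_of_norm_eq_one hd hφ h1 one_ne_zero, h1]
  obtain ⟨ψ, hψd, hψ, hψ0, hrel⟩ := exists_sub_eq_mobius_mul hd hφ h1
  have hψ1 := norm_taylorCoeff_one_le_one_of_map_zero hψd hψ hψ0
  rw [(taylorCoeff_of_sub_eq_mobius_mul hd.analyticAt_zero hψd.analyticAt_zero hψ0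
    (eventually_of_mem (ball_mem_nhds 0 one_pos) hrel)).1, norm_mul, norm_real,
    Real.norm_of_nonneg (by nlinarith [norm_nonneg (φ 0)])]
  exact mul_le_of_le_one_right (by nlinarith [norm_nonneg (φ 0)]) hψ1

lemma mapsTo_dslope_of_map_zero (hd : DifferentiableOn ℂ w (ball 0 1))
    (hw : MapsTo w (ball 0 1) (closedBall 0 1)) (hw0 : w 0 = 0) :
    MapsTo (dslope w 0) (ball 0 1) (closedBall 0 1) := fun z hz => by
  simpa using Complex.norm_dslope_le_div_of_mapsTo_ball hd (by rwa [hw0]) hz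

lemma taylorCoeff_succ_eq_dslope (hd : DifferentiableOn ℂ w (ball 0 1)) (hw0 : w 0 = 0)
    (n : ℕ) : taylorCoeff w (n + 1) = taylorCoeff (dslope w 0) n := by
  have hw : w = fun z => z * dslope w 0 z :=
    funext fun z => by simpa [hw0] using (sub_smul_dslope w 0 z).symm
  have hdslope : DifferentiableOn ℂ (dslope w 0) (ball 0 1) :=
    (differentiableOn_dslope (ball_mem_nhds 0 one_pos)).2 hd
  calc taylorCoeff w (n + 1) = taylorCoeff (fun z => z * dslope w 0 z) (n + 1) :=
        congrArg (taylorCoeff · (n + 1)) hw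
    _ = taylorCoeff (dslope w 0) n := taylorCoeff_id_mul hdslope.analyticAt_zero.contDiffAt

lemma norm_taylorCoeff_two_le_of_map_zero (hd : DifferentiableOn ℂ w (ball 0 1))
    (hw : MapsTo w (ball 0 1) (closedBall 0 1)) (hw0 : w 0 = 0) :
    ‖taylorCoeff w 2‖ ≤ 1 - ‖taylorCoeff w 1‖ ^ 2 := by
  rw [taylorCoeff_succ_eq_dslope hd hw0, taylorCoeff_succ_eq_dslope hd hw0, taylorCoeff_zero]
  exact norm_taylorCoeff_one_le ((differentiableOn_dslope (ball_mem_nhds 0 one_pos)).2 hd)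
    (mapsTo_dslope_of_map_zero hd hw hw0)

lemma norm_taylorCoeff_two_le (hd : DifferentiableOn ℂ φ (ball 0 1))
    (hφ : MapsTo φ (ball 0 1) (closedBall 0 1)) : ‖taylorCoeff φ 2‖ ≤ 1 - ‖φ 0‖ ^ 2 := by
  rcases (mem_closedBall_zero_iff.1 (hφ (mem_ball_self one_pos))).eq_or_lt with h1 | h1
  · simp [taylorCoeff_eq_zero_of_norm_eq_one hd hφ h1 two_ne_zero, h1]
  obtain ⟨ψ, hψd, hψ, hψ0, hrel⟩ := exists_sub_eq_mobius_mul hd hφ h1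
  have hψ1 := norm_taylorCoeff_one_le_one_of_map_zero hψd hψ hψ0
  have hψ2 := norm_taylorCoeff_two_le_of_map_zero hψd hψ hψ0
  rw [(taylorCoeff_of_sub_eq_mobius_mul hd.analyticAt_zero hψd.analyticAt_zero hψ0
    (eventually_of_mem (ball_mem_nhds 0 one_pos) hrel)).2, norm_mul, norm_real,
    Real.norm_of_nonneg (by nlinarith [norm_nonneg (φ 0)])]
  have hsub : ‖taylorCoeff ψ 2 - conj (φ 0) * taylorCoeff ψ 1 ^ 2‖ ≤ 1 := by
    refine (norm_sub_le _ _).trans ?_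
    rw [norm_mul, norm_conj, norm_pow]
    nlinarith [norm_nonneg (taylorCoeff ψ 1), norm_nonneg (φ 0)]
  exact mul_le_of_le_one_right (by nlinarith [norm_nonneg (φ 0)]) hsub

lemma norm_taylorCoeff_three_le_of_map_zero (hd : DifferentiableOn ℂ w (ball 0 1))
    (hw : MapsTo w (ball 0 1) (closedBall 0 1)) (hw0 : w 0 = 0) :
    ‖taylorCoeff w 3‖ ≤ 1 - ‖taylorCoeff w 1‖ ^ 2 := by
  rw [taylorCoeff_succ_eq_dslope hd hw0, taylorCoeff_succ_eq_dslope hd hw0, taylorCoeff_zero]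
  exact norm_taylorCoeff_two_le ((differentiableOn_dslope (ball_mem_nhds 0 one_pos)).2 hd)
    (mapsTo_dslope_of_map_zero hd hw hw0)

end SelfMapsOfDisk

section RealPartBound

variable {α : ℝ} {g w : ℂ → ℂ}

lemma norm_sub_one_le_norm_add {u : ℂ} (hα : α ≤ 1) (hu : α ≤ u.re) :
    ‖u - 1‖ ≤ ‖u + (1 - 2 * α : ℝ)‖ := by
  rw [norm_def, norm_def]
  apply Real.sqrt_le_sqrt
  simp only [normSq_apply, sub_re, sub_im, add_re, add_im, one_re, one_im, ofReal_re, ofReal_im]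
  nlinarith [mul_nonneg (sub_nonneg.2 hu) (sub_nonneg.2 hα)]

lemma exists_schwarz_of_le_re (hα : α < 1) (hd : DifferentiableOn ℂ g (ball 0 1))
    (hg0 : g 0 = 1) (hre : ∀ z ∈ ball (0 : ℂ) 1, α ≤ (g z).re) :
    ∃ w : ℂ → ℂ, DifferentiableOn ℂ w (ball 0 1) ∧ MapsTo w (ball 0 1) (closedBall 0 1) ∧
      w 0 = 0 ∧ ∀ z ∈ ball (0 : ℂ) 1, g z - 1 = (g z + (1 - 2 * α : ℝ)) * w z := by
  have hden : ∀ z ∈ ball (0 : ℂ) 1, g z + (1 - 2 * α : ℝ) ≠ 0 := fun z hz h => by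
    have := congrArg re h
    simp only [add_re, ofReal_re, zero_re] at this
    linarith [hre z hz]
  refine ⟨fun z => (g z - 1) / (g z + (1 - 2 * α : ℝ)), (hd.sub_const 1).div (hd.add_const _) hden,
    fun z hz => ?_, by simp [hg0], fun z hz => (mul_div_cancel₀ _ (hden z hz)).symm⟩
  rw [mem_closedBall_zero_iff, norm_div]
  exact div_le_one_of_le₀ (norm_sub_one_le_norm_add hα.le (hre z hz)) (norm_nonneg _)

lemma taylorCoeff_of_sub_one_eq_mul {c : ℂ} (hg : AnalyticAt ℂ g 0) (hw : AnalyticAt ℂ w 0)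
    (hg0 : g 0 = 1) (hw0 : w 0 = 0) (h : ∀ᶠ z in 𝓝 0, g z - 1 = (g z + c) * w z) :
    taylorCoeff g 1 = (1 + c) * taylorCoeff w 1 ∧
      taylorCoeff g 2 = (1 + c) * (taylorCoeff w 2 + taylorCoeff w 1 ^ 2) ∧
      taylorCoeff g 3 = (1 + c) * (taylorCoeff w 3 + 2 * taylorCoeff w 1 * taylorCoeff w 2 +
        taylorCoeff w 1 ^ 3) := by
  have hg' (n : ℕ) : ContDiffAt ℂ n g 0 := hg.contDiffAt
  have hw' (n : ℕ) : ContDiffAt ℂ n w 0 := hw.contDiffAt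
  have h1 := EventuallyEq.taylorCoeff_eq h 1
  have h2 := EventuallyEq.taylorCoeff_eq h 2
  have h3 := EventuallyEq.taylorCoeff_eq h 3
  simp (disch := fun_prop) only [taylorCoeff_sub, taylorCoeff_add, taylorCoeff_mul,
    taylorCoeff_const, Finset.sum_range_succ, Finset.sum_range_zero] at h1 h2 h3
  norm_num [taylorCoeff_zero, hg0, hw0] at h1 h2 h3
  refine ⟨by linear_combination h1, by linear_combination h2 + taylorCoeff w 1 * h1,
    by linear_combination h3 + taylorCoeff w 1 * h2 +
      (taylorCoeff w 2 + taylorCoeff w 1 ^ 2) * h1⟩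

end RealPartBound

lemma taylorCoeff_four_of_eq_mul_deriv_mul {f g : ℂ → ℂ} (hf : AnalyticAt ℂ f 0)
    (hg : AnalyticAt ℂ g 0) (h1 : deriv f 0 = 1) (hg0 : g 0 = 1)
    (h : ∀ᶠ z in 𝓝 0, f z = z * deriv f z * g z) :
    taylorCoeff f 4 = -taylorCoeff g 1 ^ 3 + 7 / 6 * taylorCoeff g 1 * taylorCoeff g 2 -
      taylorCoeff g 3 / 3 := by
  have hf' (n : ℕ) : ContDiffAt ℂ n (deriv f) 0 := hf.deriv.contDiffAt
  have hg' (n : ℕ) : ContDiffAt ℂ n g 0 := hg.contDiffAt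
  have h2 := EventuallyEq.taylorCoeff_eq h 2
  have h3 := EventuallyEq.taylorCoeff_eq h 3
  have h4 := EventuallyEq.taylorCoeff_eq h 4
  simp (disch := fun_prop) only [taylorCoeff_mul, taylorCoeff_id, taylorCoeff_deriv,
    Finset.sum_range_succ, Finset.sum_range_zero] at h2 h3 h4
  have ha1 : taylorCoeff f 1 = 1 := by rw [taylorCoeff_one, h1]
  norm_num [taylorCoeff_zero, ha1, hg0] at h2 h3 h4
  linear_combination (-1 / 3 : ℂ) * h4 + (taylorCoeff g 1 / 2) * h3 +
    (2 / 3 * taylorCoeff g 2 - taylorCoeff g 1 ^ 2) * h2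

lemma exists_schwarz_taylorCoeff_four_eq {α : ℝ} {f : ℂ → ℂ} (hα : α < 1)
    (hf : DifferentiableOn ℂ f (ball 0 1)) (h0 : f 0 = 0) (h1 : deriv f 0 = 1)
    (hf' : ∀ z ∈ ball (0 : ℂ) 1, deriv f z ≠ 0)
    (hre : ∀ z ∈ ball (0 : ℂ) 1, z ≠ 0 → α ≤ (f z / (z * deriv f z)).re) :
    ∃ w : ℂ → ℂ, DifferentiableOn ℂ w (ball 0 1) ∧ MapsTo w (ball 0 1) (closedBall 0 1) ∧
      w 0 = 0 ∧ taylorCoeff f 4 = ((2 * (1 - α) / 3 : ℝ) : ℂ) *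
        (-(((3 - 4 * α) * (2 - 3 * α) : ℝ) : ℂ) * taylorCoeff w 1 ^ 3 +
          ((5 - 7 * α : ℝ) : ℂ) * taylorCoeff w 1 * taylorCoeff w 2 - taylorCoeff w 3) := by
  set g : ℂ → ℂ := fun z => dslope f 0 z / deriv f z
  have hgd : DifferentiableOn ℂ g (ball 0 1) :=
    ((differentiableOn_dslope (ball_mem_nhds 0 one_pos)).2 hf).div
      (hf.analyticOnNhd isOpen_ball).deriv.differentiableOn hf'
  have hg0 : g 0 = 1 := by simp [g, h1]
  have hfg : ∀ z ∈ ball (0 : ℂ) 1, f z = z * deriv f z * g z := fun z hz => by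
    have hslope : z * dslope f 0 z = f z := by simpa [h0] using sub_smul_dslope f 0 z
    have := hf' z hz
    rw [← hslope]
    show _ = z * deriv f z * (dslope f 0 z / deriv f z)
    field_simp
  have hgre : ∀ z ∈ ball (0 : ℂ) 1, α ≤ (g z).re := fun z hz => by
    rcases eq_or_ne z 0 with rfl | hz0
    · simpa [hg0] using hα.le
    · simpa [g, dslope_of_ne _ hz0, slope_def_field, h0, div_div] using hre z hz hz0
  obtain ⟨w, hwd, hw, hw0, hgw⟩ := exists_schwarz_of_le_re hα hgd hg0 hgre
  obtain ⟨hg1, hg2, hg3⟩ := taylorCoeff_of_sub_one_eq_mul hgd.analyticAt_zero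
    hwd.analyticAt_zero hg0 hw0 (eventually_of_mem (ball_mem_nhds 0 one_pos) hgw)
  refine ⟨w, hwd, hw, hw0, ?_⟩
  rw [taylorCoeff_four_of_eq_mul_deriv_mul hf.analyticAt_zero hgd.analyticAt_zero h1 hg0
    (eventually_of_mem (ball_mem_nhds 0 one_pos) hfg), hg1, hg2, hg3]
  push_cast
  ring

lemma le_five_div_twentyFour_of_le_root {α : ℝ} (hα : α ≤ (37 - √505) / 72) : α ≤ 5 / 24 := by
  have : (22 : ℝ) ≤ √505 := Real.le_sqrt_of_sq_le (by norm_num)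
  linarith

lemma cubic_le_of_le_root {α x y v : ℝ} (hα : α ≤ (37 - √505) / 72)
    (hx0 : 0 ≤ x) (hx1 : x ≤ 1) (hy : y ≤ 1 - x ^ 2) (hv : v ≤ 1 - x ^ 2) :
    (3 - 4 * α) * (2 - 3 * α) * x ^ 3 + (5 - 7 * α) * x * y + v ≤ (3 - 4 * α) * (2 - 3 * α) := by
  have hα' := le_five_div_twentyFour_of_le_root hα
  -- `(37 - √505) / 72` is the smaller root of `36 α ^ 2 - 37 α + 6`
  have hroot : 0 ≤ 36 * α ^ 2 - 37 * α + 6 := by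
    nlinarith [Real.sq_sqrt (show (0 : ℝ) ≤ 505 by norm_num),
      mul_nonneg (sub_nonneg.2 hα)
        (show 0 ≤ (37 + √505) / 72 - α by linarith [Real.sqrt_nonneg 505])]
  have hP : 0 ≤ (3 - 4 * α) * (2 - 3 * α) - 1 := by nlinarith
  have hQ : 0 ≤ 5 - 7 * α - 1 := by linarith
  have hxy : (5 - 7 * α) * x * y ≤ (5 - 7 * α) * x * (1 - x ^ 2) :=
    mul_le_mul_of_nonneg_left hy (mul_nonneg (by linarith) hx0)
  have hcubic : (3 - 4 * α) * (2 - 3 * α) - ((3 - 4 * α) * (2 - 3 * α) * x ^ 3 +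
      ((5 - 7 * α) * x + 1) * (1 - x ^ 2)) = (1 - x) * ((1 - x) ^ 2 * ((3 - 4 * α) *
        (2 - 3 * α) - 1) + x * (1 - x) * (5 - 7 * α - 1) + x * (36 * α ^ 2 - 37 * α + 6)) := by
    ring
  have h1x : 0 ≤ 1 - x := by linarith
  nlinarith [mul_nonneg h1x (add_nonneg (add_nonneg (mul_nonneg (pow_nonneg h1x 2) hP)
    (mul_nonneg (mul_nonneg hx0 h1x) hQ)) (mul_nonneg hx0 hroot))]

lemma norm_cubic_le_of_le_root {α : ℝ} {u v t : ℂ} (hα : α ≤ (37 - √505) / 72)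
    (hu : ‖u‖ ≤ 1) (hv : ‖v‖ ≤ 1 - ‖u‖ ^ 2) (ht : ‖t‖ ≤ 1 - ‖u‖ ^ 2) :
    ‖-(((3 - 4 * α) * (2 - 3 * α) : ℝ) : ℂ) * u ^ 3 + ((5 - 7 * α : ℝ) : ℂ) * u * v - t‖ ≤
      (3 - 4 * α) * (2 - 3 * α) := by
  have hα' := le_five_div_twentyFour_of_le_root hα
  have hP : 0 ≤ (3 - 4 * α) * (2 - 3 * α) := by nlinarith
  have hQ : 0 ≤ 5 - 7 * α := by linarith
  refine (norm_sub_le _ _).trans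
    (le_trans ?_ (cubic_le_of_le_root hα (norm_nonneg u) hu hv ht))
  refine add_le_add_left ((norm_add_le _ _).trans_eq ?_) _
  simp only [norm_neg, norm_mul, norm_pow, norm_real, Real.norm_of_nonneg hP,
    Real.norm_of_nonneg hQ]

theorem stmt_17_general (α : ℝ) (hα1 : α ≤ (37 - Real.sqrt 505) / 72)
    (f : ℂ → ℂ) (hf : DifferentiableOn ℂ f (ball (0:ℂ) 1))
    (h0 : f 0 = 0) (h1 : deriv f 0 = 1)
    (hf' : ∀ z ∈ ball (0:ℂ) 1, deriv f z ≠ 0)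
    (a : ℕ → ℂ) (ha : ∀ n, a n = iteratedDeriv n f 0 / (Nat.factorial n))
    (hstar : ∀ z ∈ ball (0:ℂ) 1, z ≠ 0 → α ≤ (f z / (z * deriv f z)).re) :
    ‖a 4‖ ≤ (1 - α) * (3 - 4 * α) * (4 - 6 * α) / 3 := by
  have hα : α < 1 := by linarith [le_five_div_twentyFour_of_le_root hα1]
  obtain ⟨w, hwd, hw, hw0, ha4⟩ := exists_schwarz_taylorCoeff_four_eq hα hf h0 h1 hf' hstar
  have hbound := norm_cubic_le_of_le_root hα1
    (norm_taylorCoeff_one_le_one_of_map_zero hwd hw hw0)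
    (norm_taylorCoeff_two_le_of_map_zero hwd hw hw0)
    (norm_taylorCoeff_three_le_of_map_zero hwd hw hw0)
  rw [ha 4, ← taylorCoeff, ha4, norm_mul, norm_real, Real.norm_of_nonneg (by linarith)]
  calc _ ≤ 2 * (1 - α) / 3 * ((3 - 4 * α) * (2 - 3 * α)) :=
        mul_le_mul_of_nonneg_left hbound (by linarith)
    _ = (1 - α) * (3 - 4 * α) * (4 - 6 * α) / 3 := by ring

theorem stmt_17 (α : ℝ) (hα0 : 0 ≤ α) (hα1 : α ≤ (37 - Real.sqrt 505) / 72)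
    (f : ℂ → ℂ) (hf : DifferentiableOn ℂ f (ball (0:ℂ) 1))
    (h0 : f 0 = 0) (h1 : deriv f 0 = 1)
    (hf' : ∀ z ∈ ball (0:ℂ) 1, deriv f z ≠ 0)
    (hfz : ∀ z ∈ ball (0:ℂ) 1, z ≠ 0 → f z ≠ 0)
    (a : ℕ → ℂ) (ha : ∀ n, a n = iteratedDeriv n f 0 / (Nat.factorial n))
    (hstar : ∀ z ∈ ball (0:ℂ) 1, z ≠ 0 → α ≤ (f z / (z * deriv f z)).re) :
    ‖a 4‖ ≤ (1 - α) * (3 - 4 * α) * (4 - 6 * α) / 3 :=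
  stmt_17_general α hα1 f hf h0 h1 hf' a ha hstar
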